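/- arXiv:2212.12860 — 2 statements merged into one kernel-verified Lean document; each statement's English description precedes it below -/
import Mathlib

section
/- Let ϑ be a strictly positive finite random time, 𝔾 the progressive enlargement of 𝔽 by ϑ, and G the càdlàg Azéma supermartingale G_t = ℙ(ϑ > t | ℱ_t). Let (τ̂_n)_{n∈ℕ} be a sequence of 𝔾-stopping times with lim_{n→∞} τ̂_n = ∞, and let (τ_n)_{n∈ℕ} be a sequence of 𝔽-stopping times such that τ̂_n ∧ ϑ = τ_n ∧ ϑ for all n. Then τ := lim_{n→∞} τ_n satisfies τ ≥ ν := inf{t ∈ ℝ_+ : G_t = 0} almost surely; in particular, if G is strictly positive then τ = ∞ almost surely. -/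
open MeasureTheory Filter Set Function
open scoped Classical ENNReal NNReal

noncomputable section

variable {Ω : Type*}

/-- A process is a local martingale if it admits a localizing sequence of stopping times. -/
def IsLocalMartingale {m0 : MeasurableSpace Ω} (ℱ : Filtration ℝ m0) (μ : Measure Ω)
    (X : ℝ → Ω → ℝ) : Prop :=
  ∃ τ : ℕ → Ω → ℝ,
    (∀ n, IsStoppingTime ℱ (fun ω => (τ n ω : WithTop ℝ))) ∧ (∀ ω, Tendsto (fun n => τ n ω) atTop atTop) ∧
      ∀ n, Martingale (MeasureTheory.stoppedProcess X (fun ω => (τ n ω : WithTop ℝ))) ℱ μ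

/-- A uniformly integrable martingale. -/
def IsUIMartingale {m0 : MeasurableSpace Ω} (ℱ : Filtration ℝ m0) (μ : Measure Ω)
    (X : ℝ → Ω → ℝ) : Prop :=
  Martingale X ℱ μ ∧ UniformIntegrable X 1 μ

/-- The optional σ-algebra on ℝ × Ω: generated by the stochastic intervals ⟦τ,∞⟦. -/
def optionalSigma {m0 : MeasurableSpace Ω} (ℱ : Filtration ℝ m0) : MeasurableSpace (ℝ × Ω) :=
  MeasurableSpace.generateFrom
    {s | ∃ τ : Ω → ℝ, IsStoppingTime ℱ (fun ω => (τ ω : WithTop ℝ)) ∧ s = {p : ℝ × Ω | τ p.2 ≤ p.1}}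

/-- An `𝔽`-optional process. -/
def IsOptionalProcess {m0 : MeasurableSpace Ω} (ℱ : Filtration ℝ m0) (X : ℝ → Ω → ℝ) : Prop :=
  @Measurable (ℝ × Ω) ℝ (optionalSigma ℱ) _ fun p => X p.1 p.2

/-- The predictable σ-algebra on ℝ × Ω. -/
def predictableSigma {m0 : MeasurableSpace Ω} (ℱ : Filtration ℝ m0) :
    MeasurableSpace (ℝ × Ω) :=
  MeasurableSpace.generateFrom
    ({s | ∃ u v : ℝ, ∃ A : Set Ω, MeasurableSet[ℱ u] A ∧ s = Ioc u v ×ˢ A} ∪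
      {s | ∃ A : Set Ω, MeasurableSet[ℱ 0] A ∧ s = Iic 0 ×ˢ A})

/-- An `𝔽`-predictable process. -/
def IsPredictableProcess {m0 : MeasurableSpace Ω} (ℱ : Filtration ℝ m0) (X : ℝ → Ω → ℝ) :
    Prop :=
  @Measurable (ℝ × Ω) ℝ (predictableSigma ℱ) _ fun p => X p.1 p.2

/-- The Lebesgue–Stieltjes measure attached to the path `t ↦ B t ω` (zero junk value if the
path is not a nondecreasing right-continuous function). -/
def pathMeasure (B : ℝ → Ω → ℝ) (ω : Ω) : Measure ℝ :=
  if h : Monotone (fun t => B t ω) ∧ ∀ x, ContinuousWithinAt (fun t => B t ω) (Ici x) x then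
    StieltjesFunction.measure ⟨fun t => B t ω, h.1, h.2⟩
  else 0

/-- The jump `ΔX_t = X_t − X_{t−}` of a process at time `t`. -/
def jumpAt (X : ℝ → Ω → ℝ) (t : ℝ) (ω : Ω) : ℝ :=
  X t ω - leftLim (fun s => X s ω) t

/-- The right jump `Δ⁺X_t = X_{t+} − X_t` of a process at time `t`. -/
def jumpPlusAt (X : ℝ → Ω → ℝ) (t : ℝ) (ω : Ω) : ℝ :=
  rightLim (fun s => X s ω) t - X t ω

/-- The process `X` pre-stopped strictly before the random time `ϑ`,
`X^{ϑ−} = X 1_{[0,ϑ)} + X_{ϑ−} 1_{[ϑ,∞)}`. -/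
def preStopped (X : ℝ → Ω → ℝ) (ϑ : Ω → ℝ) : ℝ → Ω → ℝ := fun t ω =>
  if t < ϑ ω then X t ω else leftLim (fun s => X s ω) (ϑ ω)

/-- `𝒢` is the progressive enlargement of `𝔽` by observations of the random time `ϑ`:
`𝒢_t = ⋂_{u>t} (ℱ_u ⊔ σ(ϑ ∧ u))`. -/
def IsProgressiveEnlargement {m0 : MeasurableSpace Ω} (ℱ 𝒢 : Filtration ℝ m0) (ϑ : Ω → ℝ) :
    Prop :=
  ∀ t : ℝ, (𝒢 t : MeasurableSpace Ω) =
    ⨅ u ∈ Ioi t, ((ℱ u : MeasurableSpace Ω) ⊔ MeasurableSpace.comap (fun ω => min (ϑ ω) u) (borel ℝ))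

/-- `G` is (a version of) the Azéma supermartingale of `ϑ`: `G_t = μ(ϑ > t | ℱ_t)`. -/
def IsAzemaSupermartingale {m0 : MeasurableSpace Ω} (ℱ : Filtration ℝ m0) (μ : Measure Ω)
    (ϑ : Ω → ℝ) (G : ℝ → Ω → ℝ) : Prop :=
  ∀ t : ℝ, G t =ᵐ[μ] μ[Set.indicator {ω | t < ϑ ω} (fun _ => (1 : ℝ)) | ℱ t]

/-- `G̃` is (a version of) the optional Azéma supermartingale of `ϑ`: `G̃_t = μ(ϑ ≥ t | ℱ_t)`. -/
def IsOptionalAzemaSupermartingale {m0 : MeasurableSpace Ω} (ℱ : Filtration ℝ m0)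
    (μ : Measure Ω) (ϑ : Ω → ℝ) (Gt : ℝ → Ω → ℝ) : Prop :=
  ∀ t : ℝ, Gt t =ᵐ[μ] μ[Set.indicator {ω | t ≤ ϑ ω} (fun _ => (1 : ℝ)) | ℱ t]

/-- `Ao` is the dual `𝔽`-optional projection (under `μ`) of the indicator process
`A = 1_{[ϑ,∞)}` of the random time `ϑ`. -/
def IsDualOptionalProjection {m0 : MeasurableSpace Ω} (ℱ : Filtration ℝ m0) (μ : Measure Ω)
    (ϑ : Ω → ℝ) (Ao : ℝ → Ω → ℝ) : Prop :=
  Adapted ℱ Ao ∧ (∀ ω, Monotone fun t => Ao t ω) ∧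
    (∀ ω x, ContinuousWithinAt (fun t => Ao t ω) (Ici x) x) ∧
    (∀ t : ℝ, ∀ ω, t < 0 → Ao t ω = 0) ∧
    ∀ H : ℝ → Ω → ℝ, IsOptionalProcess ℱ H → (∃ C, ∀ t ω, |H t ω| ≤ C) →
      ∫ ω, H (ϑ ω) ω ∂μ = ∫ ω, (∫ s, H s ω ∂(pathMeasure Ao ω)) ∂μ

/-- `Ap` is the dual `𝔽`-predictable projection (under `μ`) of the indicator process
`A = 1_{[ϑ,∞)}` of the random time `ϑ`. -/
def IsDualPredictableProjection {m0 : MeasurableSpace Ω} (ℱ : Filtration ℝ m0) (μ : Measure Ω)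
    (ϑ : Ω → ℝ) (Ap : ℝ → Ω → ℝ) : Prop :=
  IsPredictableProcess ℱ Ap ∧ (∀ ω, Monotone fun t => Ap t ω) ∧
    (∀ ω x, ContinuousWithinAt (fun t => Ap t ω) (Ici x) x) ∧
    (∀ t : ℝ, ∀ ω, t < 0 → Ap t ω = 0) ∧
    ∀ H : ℝ → Ω → ℝ, IsPredictableProcess ℱ H → (∃ C, ∀ t ω, |H t ω| ≤ C) →
      ∫ ω, H (ϑ ω) ω ∂μ = ∫ ω, (∫ s, H s ω ∂(pathMeasure Ap ω)) ∂μ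

/-- `C` is (a version of) the quadratic covariation `[M,N]`: it starts from `0`, has paths of
finite variation, jumps `ΔC = ΔM ΔN`, and `MN − C` is a local martingale. -/
def IsQuadraticCovariation {m0 : MeasurableSpace Ω} (ℱ : Filtration ℝ m0) (μ : Measure Ω)
    (M N C : ℝ → Ω → ℝ) : Prop :=
  (∀ ω, C 0 ω = 0) ∧
    (∀ ω, ∃ f g : ℝ → ℝ, Monotone f ∧ Monotone g ∧ ∀ t, C t ω = f t - g t) ∧
    (∀ t ω, jumpAt C t ω = jumpAt M t ω * jumpAt N t ω) ∧
    IsLocalMartingale ℱ μ fun t ω => M t ω * N t ω - C t ω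

/-- `oX` is (a version of) the `𝔽`-optional projection of `X` under `μ`:
`oX_τ = E[X_τ | ℱ_τ]` a.s. for every finite stopping time `τ`. -/
def IsOptionalProjection {m0 : MeasurableSpace Ω} (ℱ : Filtration ℝ m0) (μ : Measure Ω)
    (X oX : ℝ → Ω → ℝ) : Prop :=
  IsOptionalProcess ℱ oX ∧
    ∀ (τ : Ω → ℝ) (hτ : IsStoppingTime ℱ (fun ω => (τ ω : WithTop ℝ))),
      (fun ω => oX (τ ω) ω) =ᵐ[μ] μ[fun ω => X (τ ω) ω | hτ.measurableSpace]

/-- An abstract stochastic-integration context: a stochastic-integral operation `H ⋅ X` and a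
Doléans (stochastic) exponential `ℰ(X)`, with the requirement that the integral of a process
against a finite-variation integrator is the pathwise Lebesgue–Stieltjes integral and that
`ℰ(X)` solves `Z_t = 1 + (Z_{−} ⋅ X)_t`. -/
structure StochasticCalculus (Ω : Type*) where
  integral : (ℝ → Ω → ℝ) → (ℝ → Ω → ℝ) → ℝ → Ω → ℝ
  dol : (ℝ → Ω → ℝ) → ℝ → Ω → ℝ
  integral_fv :
    ∀ H X hp hm : ℝ → Ω → ℝ,
      (∀ ω, Monotone fun t => hp t ω) → (∀ ω, Monotone fun t => hm t ω) →
        (∀ ω x, ContinuousWithinAt (fun t => hp t ω) (Ici x) x) →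
          (∀ ω x, ContinuousWithinAt (fun t => hm t ω) (Ici x) x) →
            (∀ t ω, X t ω = hp t ω - hm t ω) →
              ∀ t ω, integral H X t ω =
                (∫ s in Ioc 0 t, H s ω ∂(pathMeasure hp ω)) -
                  ∫ s in Ioc 0 t, H s ω ∂(pathMeasure hm ω)
  dol_spec : ∀ X : ℝ → Ω → ℝ, ∀ t ω,
    dol X t ω = 1 + integral (fun s ω' => leftLim (fun u => dol X u ω') s) X t ω

/-- The (multi-dimensional) local martingale `M` has the predictable representation property
for the filtration `𝔽` under `μ`. -/
def HasPRP {m0 : MeasurableSpace Ω} (SC : StochasticCalculus Ω) (ℱ : Filtration ℝ m0)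
    (μ : Measure Ω) {d : ℕ} (M : Fin d → ℝ → Ω → ℝ) : Prop :=
  ∀ N : ℝ → Ω → ℝ, IsLocalMartingale ℱ μ N →
    ∃ ξ : Fin d → ℝ → Ω → ℝ, (∀ i, IsPredictableProcess ℱ (ξ i)) ∧
      ∀ t ω, N t ω = N 0 ω + ∑ i, SC.integral (ξ i) (M i) t ω

/-- `Z` is a martingale density for the market `(S,𝔽,μ)`. -/
def IsMartingaleDensity {m0 : MeasurableSpace Ω} (SC : StochasticCalculus Ω)
    (ℱ : Filtration ℝ m0) (μ : Measure Ω) {k : ℕ} (S : Fin k → ℝ → Ω → ℝ)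
    (Z : ℝ → Ω → ℝ) : Prop :=
  (∀ ω, Z 0 ω = 1) ∧ (∀ t ω, 0 < Z t ω) ∧ IsUIMartingale ℱ μ Z ∧
    ∃ φ : ℝ → Ω → ℝ, IsPredictableProcess ℱ φ ∧ (∀ t ω, 0 < φ t ω ∧ φ t ω ≤ 1) ∧
      ∀ i, IsLocalMartingale ℱ μ fun t ω => Z t ω * SC.integral φ (S i) t ω

/-- `Y` is the essential supremum of the family `X` of random variables, under `μ`. -/
def IsEssSupFamily {m0 : MeasurableSpace Ω} {ι : Sort*} (μ : Measure Ω) (X : ι → Ω → ℝ) (Y : Ω → ℝ) : Prop :=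
  (∀ i, X i ≤ᵐ[μ] Y) ∧ ∀ Z : Ω → ℝ, (∀ i, X i ≤ᵐ[μ] Z) → Y ≤ᵐ[μ] Z

/-- `Y` is the essential infimum of the family `X` of random variables, under `μ`. -/
def IsEssInfFamily {m0 : MeasurableSpace Ω} {ι : Sort*} (μ : Measure Ω) (X : ι → Ω → ℝ) (Y : Ω → ℝ) : Prop :=
  (∀ i, Y ≤ᵐ[μ] X i) ∧ ∀ Z : Ω → ℝ, (∀ i, Z ≤ᵐ[μ] X i) → Z ≤ᵐ[μ] Y


/-- A predictable stopping time: a stopping time admitting an announcing sequence. -/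
def IsPredictableStoppingTime {m0 : MeasurableSpace Ω} (ℱ : Filtration ℝ m0) (σ : Ω → ℝ) :
    Prop :=
  IsStoppingTime ℱ (fun ω => (σ ω : WithTop ℝ)) ∧ ∃ σn : ℕ → Ω → ℝ, (∀ n, IsStoppingTime ℱ (fun ω => (σn n ω : WithTop ℝ))) ∧
    (∀ n ω, σn n ω ≤ σn (n + 1) ω) ∧ (∀ ω, Tendsto (fun n => σn n ω) atTop (nhds (σ ω))) ∧
      ∀ n ω, 0 < σ ω → σn n ω < σ ω

/-- Membership in the space `𝒮²`: the second moments of the values of the process at all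
stopping times with values in `[0,T]` are uniformly bounded. -/
def MemS2 {m0 : MeasurableSpace Ω} (ℱ : Filtration ℝ m0) (μ : Measure Ω) (T : ℝ)
    (X : ℝ → Ω → ℝ) : Prop :=
  IsOptionalProcess ℱ X ∧ ∃ b : ℝ≥0∞, b ≠ ⊤ ∧
    ∀ τ : Ω → ℝ, IsStoppingTime ℱ (fun ω => (τ ω : WithTop ℝ)) → (∀ ω, τ ω ∈ Icc 0 T) →
      ∫⁻ ω, ENNReal.ofReal ((X (τ ω) ω) ^ 2) ∂μ ≤ b

/-- Membership in the space `ℋ²(M)`, where `QM` is the quadratic variation `[M]` of the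
driving martingale `M`. -/
def MemH2 {m0 : MeasurableSpace Ω} (ℱ : Filtration ℝ m0) (μ : Measure Ω) (T : ℝ)
    (QM : ℝ → Ω → ℝ) (Z : ℝ → Ω → ℝ) : Prop :=
  IsPredictableProcess ℱ Z ∧
    ∫⁻ ω, (∫⁻ s in Ioc 0 T, ENNReal.ofReal ((Z s ω) ^ 2) ∂(pathMeasure QM ω)) ∂μ < ⊤

/-- `(Y, Zp, K = Kc + Kd + Kg)` solves, on `[0,T]`, the reflected generalized BSDE with
terminal condition `P_T`, generator `gen` integrated against `dΓ`, extra finite-variation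
driver `extra`, martingale part driven by `MQ`, lower obstacle `P` and the Skorokhod
minimality conditions for the three parts of `K`. -/
def SolvesReflectedGBSDE {m0 : MeasurableSpace Ω} (ℱ : Filtration ℝ m0) (μ : Measure Ω)
    (SC : StochasticCalculus Ω) {d : ℕ} (MQ : Fin d → ℝ → Ω → ℝ) (Γ : ℝ → Ω → ℝ)
    (P : ℝ → Ω → ℝ) (T : ℝ) (gen : ℝ → Ω → ℝ → ℝ) (extra : ℝ → Ω → ℝ)
    (Y : ℝ → Ω → ℝ) (Zp : Fin d → ℝ → Ω → ℝ) (K Kc Kd Kg : ℝ → Ω → ℝ) : Prop :=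
  (∀ i, IsPredictableProcess ℱ (Zp i)) ∧
    IsPredictableProcess ℱ K ∧ (∀ ω, K 0 ω = 0) ∧ (∀ ω, Monotone fun t => K t ω) ∧
    (∀ t ω, K t ω = Kc t ω + Kd t ω + Kg t ω) ∧
    (∀ ω, Continuous fun t => Kc t ω) ∧ (∀ ω, Monotone fun t => Kc t ω) ∧
    (∀ ω, Monotone fun t => Kd t ω) ∧
    (∀ ω x, ContinuousWithinAt (fun t => Kd t ω) (Ici x) x) ∧
    IsPredictableProcess ℱ Kd ∧
    (∀ t ω, Kd t ω = ∑' s : (Iic t : Set ℝ), jumpAt Kd (s : ℝ) ω) ∧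
    (∀ ω, Monotone fun t => Kg t ω) ∧
    (∀ t ω, Kg t ω = ∑' s : (Ico 0 t : Set ℝ), jumpPlusAt Kg (s : ℝ) ω) ∧
    (∀ t : ℝ, t ∈ Icc 0 T → ∀ᵐ ω ∂μ,
      Y t ω = P T ω + (∫ s in Ioc t T, gen s ω (Y s ω) ∂(pathMeasure Γ ω)) +
        (extra T ω - extra t ω) -
          (∑ i, (SC.integral (Zp i) (MQ i) T ω - SC.integral (Zp i) (MQ i) t ω)) +
            (K T ω - K t ω)) ∧
    (∀ τ : Ω → ℝ, IsStoppingTime ℱ (fun ω => (τ ω : WithTop ℝ)) → (∀ ω, τ ω ∈ Icc 0 T) →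
      ∀ᵐ ω ∂μ, P (τ ω) ω ≤ Y (τ ω) ω) ∧
    (∀ᵐ ω ∂μ, ∫ s in Ioc 0 T,
        (if limsup (fun u => P u ω) (nhdsWithin s (Iio s)) < leftLim (fun u => Y u ω) s
          then (1 : ℝ) else 0) ∂(pathMeasure Kc ω) = 0) ∧
    (∀ σ : Ω → ℝ, IsPredictableStoppingTime ℱ σ → (∀ ω, σ ω ∈ Icc 0 T) →
      ∀ᵐ ω ∂μ, (leftLim (fun u => Y u ω) (σ ω) -
        limsup (fun u => P u ω) (nhdsWithin (σ ω) (Iio (σ ω)))) * jumpAt Kd (σ ω) ω = 0) ∧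
    ∀ σ : Ω → ℝ, IsStoppingTime ℱ (fun ω => (σ ω : WithTop ℝ)) → (∀ ω, σ ω ∈ Icc 0 T) →
      ∀ᵐ ω ∂μ, (Y (σ ω) ω - P (σ ω) ω) * jumpPlusAt Kg (σ ω) ω = 0

/-- The right support of a nondecreasing function. -/
def rightSupport (B : ℝ → ℝ) : Set ℝ :=
  {t : ℝ | ∀ ε > 0, 0 < B (t + ε) - B t}

/-! Since `τ_n ∧ ϑ = τ̂_n ∧ ϑ` and `τ̂_n → ∞`, on the `ℱ_q`-measurable event
`{τ_n < q eventually}` one has `ϑ ≤ q`, so the conditional probability `G_q = μ(ϑ > q | ℱ_q)`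
vanishes there almost surely. This event contains `{lim τ_n < q}`; letting `q` run through the
rationals gives `ν ≤ lim τ_n` almost surely. -/

theorem condExp_eq_zero_ae_on_of_eq_zero_on {m m0 : MeasurableSpace Ω} {μ : Measure Ω}
    {f : Ω → ℝ} {s : Set Ω} (hf : Integrable f μ) (hs : MeasurableSet[m] s)
    (hfs : ∀ ω ∈ s, f ω = 0) : ∀ᵐ ω ∂μ, ω ∈ s → μ[f | m] ω = 0 := by
  have hzero : s.indicator f = 0 := funext fun ω => indicator_apply_eq_zero.2 (hfs ω)
  have h := condExp_indicator (m := m) hf hs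
  rw [hzero, condExp_zero] at h
  filter_upwards [h] with ω hω hωs
  rw [Pi.zero_apply, indicator_of_mem hωs] at hω
  exact hω.symm

theorem eventually_le_of_min_eq_min {a b : ℕ → ℝ} {c q : ℝ} (ha : Tendsto a atTop atTop)
    (hab : ∀ n, min (a n) c = min (b n) c) (hq : q ≤ c) : ∀ᶠ n in atTop, q ≤ b n := by
  filter_upwards [ha.eventually_ge_atTop q] with n hn
  calc q ≤ min (a n) c := le_min hn hq
    _ = min (b n) c := hab n
    _ ≤ b n := min_le_left _ _

theorem measurableSet_eventually_lt_of_isStoppingTime {m0 : MeasurableSpace Ω}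
    {ℱ : Filtration ℝ m0} {τ : ℕ → Ω → ℝ}
    (hτ : ∀ n, IsStoppingTime ℱ (fun ω => (τ n ω : WithTop ℝ))) (q : ℝ) :
    MeasurableSet[ℱ q] {ω | ∀ᶠ n in atTop, τ n ω < q} := by
  have hlt : ∀ n, MeasurableSet[ℱ q] {ω | τ n ω < q} := fun n => by
    simpa only [WithTop.coe_lt_coe] using (hτ n).measurableSet_lt q
  convert @MeasurableSet.measurableSet_liminf _ (ℱ q) _ hlt using 1
  ext ω
  exact (mem_liminf_iff_eventually_mem (s := fun n => {ω | τ n ω < q})).symm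

theorem azema_eq_zero_of_limit_lt {m0 : MeasurableSpace Ω} {μ : Measure Ω}
    [IsFiniteMeasure μ] {ℱ : Filtration ℝ m0} {ϑ : Ω → ℝ} (hϑ : Measurable ϑ)
    {G : ℝ → Ω → ℝ} (hG : IsAzemaSupermartingale ℱ μ ϑ G) {τhat τ : ℕ → Ω → ℝ}
    (hτhat : ∀ ω, Tendsto (fun n => τhat n ω) atTop atTop)
    (hτ : ∀ n, IsStoppingTime ℱ (fun ω => (τ n ω : WithTop ℝ)))
    (hagree : ∀ n ω, min (τhat n ω) (ϑ ω) = min (τ n ω) (ϑ ω))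
    {τlim : Ω → EReal} (hτlim : ∀ ω, Tendsto (fun n => (τ n ω : EReal)) atTop (nhds (τlim ω)))
    (q : ℝ) : ∀ᵐ ω ∂μ, τlim ω < q → G q ω = 0 := by
  have hvanish : ∀ ω ∈ {ω | ∀ᶠ n in atTop, τ n ω < q},
      {ω | q < ϑ ω}.indicator (fun _ => (1 : ℝ)) ω = 0 := by
    intro ω hω
    refine indicator_of_notMem (fun hqϑ => ?_) _
    obtain ⟨n, hlt, hle⟩ :=
      (hω.and (eventually_le_of_min_eq_min (hτhat ω) (hagree · ω) (le_of_lt hqϑ))).exists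
    exact hle.not_gt hlt
  have hint : Integrable ({ω | q < ϑ ω}.indicator fun _ => (1 : ℝ)) μ :=
    (integrable_const 1).indicator (measurableSet_lt measurable_const hϑ)
  filter_upwards [hG q, condExp_eq_zero_ae_on_of_eq_zero_on hint
    (measurableSet_eventually_lt_of_isStoppingTime hτ q) hvanish] with ω hGq hzero hlim
  rw [hGq]
  exact hzero ((hτlim ω).eventually_lt_const hlim |>.mono fun _ => EReal.coe_lt_coe_iff.mp)

theorem sInf_setOf_eq_zero_le {g : ℝ → ℝ} {x : EReal} (hx : 0 ≤ x)
    (hg : ∀ p : ℚ, x < (p : ℝ) → g p = 0) :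
    sInf {t : EReal | ∃ r : ℝ, t = (r : EReal) ∧ 0 ≤ r ∧ g r = 0} ≤ x := by
  by_contra! hlt
  obtain ⟨p, hxp, hp⟩ := EReal.exists_rat_btwn_of_lt hlt
  have hp0 : (0 : ℝ) ≤ p := EReal.coe_nonneg.mp (hx.trans hxp.le)
  exact hp.not_ge (sInf_le ⟨p, rfl, hp0, hg p hxp⟩)

theorem reduction_limit_dominates_zero_time_general
    {Ω : Type*} {m0 : MeasurableSpace Ω} (μ : Measure Ω) [IsProbabilityMeasure μ]
    (ℱ : Filtration ℝ m0) (ϑ : Ω → ℝ) (hϑmeas : Measurable ϑ) (hϑpos : ∀ ω, 0 < ϑ ω)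
    (G : ℝ → Ω → ℝ) (hG : IsAzemaSupermartingale ℱ μ ϑ G)
    (τhat : ℕ → Ω → ℝ)
    (hτhatlim : ∀ ω, Tendsto (fun n => τhat n ω) atTop atTop)
    (τ : ℕ → Ω → ℝ) (hτ : ∀ n, IsStoppingTime ℱ (fun ω => (τ n ω : WithTop ℝ)))
    (hagree : ∀ n ω, min (τhat n ω) (ϑ ω) = min (τ n ω) (ϑ ω))
    (τlim : Ω → EReal)
    (hτlim : ∀ ω, Tendsto (fun n => (τ n ω : EReal)) atTop (nhds (τlim ω))) :
    (∀ᵐ ω ∂μ,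
        sInf {t : EReal | ∃ r : ℝ, t = (r : EReal) ∧ 0 ≤ r ∧ G r ω = 0} ≤ τlim ω) ∧
      ((∀ t : ℝ, ∀ ω, 0 < G t ω) → ∀ᵐ ω ∂μ, τlim ω = ⊤) := by
  have hlim_nonneg : ∀ ω, 0 ≤ τlim ω := fun ω =>
    ge_of_tendsto (hτlim ω) <| (eventually_le_of_min_eq_min (hτhatlim ω) (hagree · ω)
      (hϑpos ω).le).mono fun _ h => EReal.coe_nonneg.mpr h
  have hzero : ∀ᵐ ω ∂μ, ∀ p : ℚ, τlim ω < (p : ℝ) → G p ω = 0 := ae_all_iff.2 fun p =>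
    azema_eq_zero_of_limit_lt hϑmeas hG hτhatlim hτ hagree hτlim p
  have hν : ∀ᵐ ω ∂μ,
      sInf {t : EReal | ∃ r : ℝ, t = (r : EReal) ∧ 0 ≤ r ∧ G r ω = 0} ≤ τlim ω :=
    hzero.mono fun ω h => sInf_setOf_eq_zero_le (hlim_nonneg ω) h
  refine ⟨hν, fun hpos => hν.mono fun ω h => ?_⟩
  have hempty : {t : EReal | ∃ r : ℝ, t = (r : EReal) ∧ 0 ≤ r ∧ G r ω = 0} = ∅ :=
    eq_empty_of_forall_notMem fun _ ⟨r, _, _, hr⟩ => (hpos r ω).ne' hr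
  rwa [hempty, sInf_empty, top_le_iff] at h

/-- Lemma 2.4. If `(τ̂_n)` is a sequence of `𝔾`-stopping times tending to `∞`
and `(τ_n)` are `𝔽`-stopping times with `τ̂_n ∧ ϑ = τ_n ∧ ϑ`, then the limit `τ` of `(τ_n)`
satisfies `τ ≥ ν := inf{t ≥ 0 : G_t = 0}` a.s.; in particular `τ = ∞` a.s. if `G > 0`. -/
theorem reduction_limit_dominates_zero_time
    {Ω : Type*} {m0 : MeasurableSpace Ω} (μ : Measure Ω) [IsProbabilityMeasure μ]
    (ℱ 𝒢 : Filtration ℝ m0) (ϑ : Ω → ℝ) (hϑmeas : Measurable ϑ) (hϑpos : ∀ ω, 0 < ϑ ω)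
    (hprog : IsProgressiveEnlargement ℱ 𝒢 ϑ)
    (G : ℝ → Ω → ℝ) (hG : IsAzemaSupermartingale ℱ μ ϑ G)
    (hGrc : ∀ ω x, ContinuousWithinAt (fun t => G t ω) (Ici x) x)
    (τhat : ℕ → Ω → ℝ) (hτhat : ∀ n, IsStoppingTime 𝒢 (fun ω => (τhat n ω : WithTop ℝ)))
    (hτhatlim : ∀ ω, Tendsto (fun n => τhat n ω) atTop atTop)
    (τ : ℕ → Ω → ℝ) (hτ : ∀ n, IsStoppingTime ℱ (fun ω => (τ n ω : WithTop ℝ)))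
    (hagree : ∀ n ω, min (τhat n ω) (ϑ ω) = min (τ n ω) (ϑ ω))
    (τlim : Ω → EReal)
    (hτlim : ∀ ω, Tendsto (fun n => (τ n ω : EReal)) atTop (nhds (τlim ω))) :
    (∀ᵐ ω ∂μ,
        sInf {t : EReal | ∃ r : ℝ, t = (r : EReal) ∧ 0 ≤ r ∧ G r ω = 0} ≤ τlim ω) ∧
      ((∀ t : ℝ, ∀ ω, 0 < G t ω) → ∀ᵐ ω ∂μ, τlim ω = ⊤) :=
  reduction_limit_dominates_zero_time_general μ ℱ ϑ hϑmeas hϑpos G hG τhat hτhatlim τ hτ hagree τlim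
    hτlim

end
end

section
/- Let Γ̃ be a continuous bounded nondecreasing 𝔽-adapted process, R a bounded right-continuous process, P_T a bounded terminal variable, and set Γ̃ⁿ = nΓ̃. Then for any 𝔽-stopping time ν with ℙ(ν ∈ S̄ ∩ [0,T]) = 1, where S̄ = S^r(Γ̃) ∪ {T} and S^r(Γ̃) is the right support of Γ̃, one has almost surely lim_{n→∞} [ P_T e^{Γ̃ⁿ_ν − Γ̃ⁿ_T} + ∫_{(ν,T]} R_s e^{Γ̃ⁿ_ν − Γ̃ⁿ_s} dΓ̃ⁿ_s ] = P_ν 1_{ν = T} + R_ν 1_{ν < T}; in particular, on {ν < T} the measures 1_{(ν,T]} e^{Γ̃ⁿ_ν − Γ̃ⁿ_s} dΓ̃ⁿ_s converge to the Dirac measure at ν. -/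
open MeasureTheory Filter Set Function
open scoped Classical ENNReal NNReal

noncomputable section

variable {Ω : Type*}

/-! Fix a path and write `f = Γ̃(ω)`, `a = ν(ω)`. Since `f` is continuous, the substitution
`u = f s` turns `∫_{(x,y]} h (f s) df(s)` into `∫_{f x}^{f y} h u du`, so the weights
`n e^{n(f a - f s)} df(s)` on `(a, T]` have mass `1 - e^{n(f a - f T)}`. Because `a` is in the right
support of `f`, `f` increases strictly just after `a`, so this mass tends to `1` and the weights
tend to `0` uniformly away from `a`: they are peak functions at `a`, and integrate the
right-continuous `R` to `R a`. The terminal weight `e^{n(f a - f T)}` tends to `0` for the same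
reason. -/
open scoped Topology

lemma measurable_of_continuousWithinAt_Ici {f : ℝ → ℝ}
    (hf : ∀ x, ContinuousWithinAt f (Ici x) x) : Measurable f := by
  -- `f` is the pointwise limit of the step functions `x ↦ f (⌈x (n + 1)⌉ / (n + 1))`, which
  -- sample `f` at grid points approaching `x` from the right.
  have hgrid (x : ℝ) :
      Tendsto (fun n : ℕ => (⌈x * (n + 1)⌉ : ℝ) / (n + 1)) atTop (𝓝[≥] x) := by
    have hpos (n : ℕ) : (0 : ℝ) < n + 1 := n.cast_add_one_pos
    refine tendsto_nhdsWithin_iff.2 ⟨?_, Eventually.of_forall fun n => ?_⟩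
    · refine tendsto_of_tendsto_of_tendsto_of_le_of_le tendsto_const_nhds
        (by simpa using tendsto_one_div_add_atTop_nhds_zero_nat.const_add x) (fun n => ?_)
        (fun n => ?_)
      · exact (le_div_iff₀ (hpos n)).2 (Int.le_ceil _)
      · rw [div_le_iff₀ (hpos n), add_mul, inv_mul_cancel₀ (hpos n).ne']
        exact (Int.ceil_lt_add_one _).le
    · exact (le_div_iff₀ (hpos n)).2 (Int.le_ceil _)
  refine measurable_of_tendsto_metrizable (fun n => ?_)
    (tendsto_pi_nhds.2 fun x => (hf x).tendsto.comp (hgrid x))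
  exact (measurable_from_top (f := fun m : ℤ => f (m / (n + 1)))).comp
    (Int.measurable_ceil.comp (measurable_id.mul_const _))

lemma lt_of_mem_rightSupport {g : ℝ → ℝ} {a b : ℝ} (ha : a ∈ rightSupport g) (hab : a < b) :
    g a < g b := by
  simpa using ha (b - a) (sub_pos.2 hab)

lemma tendsto_exp_nat_mul_sub_nat_mul {x y : ℝ} (hxy : x < y) :
    Tendsto (fun n : ℕ => Real.exp (n * x - n * y)) atTop (𝓝 0) := by
  have h : Tendsto (fun n : ℕ => (n : ℝ) * (x - y)) atTop atBot :=
    tendsto_natCast_atTop_atTop.atTop_mul_const_of_neg (sub_neg.2 hxy)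
  exact Real.tendsto_exp_atBot.comp (by simpa only [mul_sub] using h)

lemma tendsto_nat_mul_exp_neg_nat_mul {δ : ℝ} (hδ : 0 < δ) :
    Tendsto (fun n : ℕ => (n : ℝ) * Real.exp (-(n * δ))) atTop (𝓝 0) := by
  have h := (Real.tendsto_pow_mul_exp_neg_atTop_nhds_zero 1).comp
    (tendsto_natCast_atTop_atTop.atTop_mul_const hδ)
  simpa [Function.comp_def, hδ.ne', mul_assoc, mul_left_comm] using h.const_mul δ⁻¹

lemma tendstoUniformlyOn_nat_mul_exp_sub_of_mem_rightSupport {g : ℝ → ℝ} (hg : Monotone g)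
    {a : ℝ} (ha : a ∈ rightSupport g) {u : Set ℝ} (hu : u ∈ 𝓝 a) :
    TendstoUniformlyOn (fun (n : ℕ) s => (n : ℝ) * Real.exp (n * g a - n * g s)) 0 atTop
      (Ioi a \ u) := by
  obtain ⟨ε, hε, hball⟩ := Metric.mem_nhds_iff.1 hu
  have hδ : 0 < g (a + ε) - g a := ha ε hε
  refine Metric.tendstoUniformlyOn_iff.2 fun η hη => ?_
  filter_upwards [(tendsto_nat_mul_exp_neg_nat_mul hδ).eventually (gt_mem_nhds hη)] with n hn s hs
  have has : a + ε ≤ s := by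
    by_contra! h
    refine hs.2 (hball (Metric.mem_ball.2 ?_))
    rw [Real.dist_eq, abs_of_pos (sub_pos.2 hs.1)]
    linarith
  rw [Pi.zero_apply, dist_zero_left, Real.norm_of_nonneg (by positivity)]
  refine lt_of_le_of_lt (mul_le_mul_of_nonneg_left (Real.exp_le_exp.2 ?_) n.cast_nonneg) hn
  nlinarith [hg has, (n.cast_nonneg : (0 : ℝ) ≤ n)]

namespace StieltjesFunction

variable (f : StieltjesFunction ℝ)

instance isFiniteMeasure_restrict_Ioc (a b : ℝ) :
    IsFiniteMeasure (f.measure.restrict (Ioc a b)) :=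
  ⟨by simp [f.measure_Ioc]⟩

lemma exists_preimage_Iic_inter_Ioc_eq (hf : Continuous f) {a b c : ℝ} (hab : a ≤ b)
    (hc : c ∈ Ico (f a) (f b)) :
    ∃ q ∈ Icc a b, f q = c ∧ f ⁻¹' Iic c ∩ Ioc a b = Ioc a q := by
  have hS : IsCompact (Icc a b ∩ f ⁻¹' Iic c) :=
    isCompact_Icc.inter_right (isClosed_Iic.preimage hf)
  obtain ⟨q, ⟨hqab, hqc⟩, hq⟩ := hS.exists_isGreatest ⟨a, ⟨le_rfl, hab⟩, hc.1⟩
  have hfq : f q = c := by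
    refine le_antisymm hqc (not_lt.1 fun hlt => ?_)
    have hqb : q < b := lt_of_le_of_ne hqab.2 fun h => hc.2.not_ge (h ▸ hqc)
    obtain ⟨s, hqs, hfs, hsb⟩ := (((hf.tendsto q).eventually (eventually_lt_nhds hlt)).and
      (eventually_lt_nhds hqb)).exists_gt
    exact hqs.not_ge (hq ⟨⟨hqab.1.trans hqs.le, hsb.le⟩, hfs.le⟩)
  refine ⟨q, hqab, hfq, Set.ext fun s => ⟨fun ⟨hfs, has, hsb⟩ => ⟨has, hq ⟨⟨has.le, hsb⟩, hfs⟩⟩,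
    fun ⟨has, hsq⟩ => ⟨(f.mono hsq).trans hfq.le, has, hsq.trans hqab.2⟩⟩⟩

lemma map_measure_restrict_Ioc (hf : Continuous f) {a b : ℝ} (hab : a ≤ b) :
    (f.measure.restrict (Ioc a b)).map f = volume.restrict (Ioc (f a) (f b)) := by
  refine Measure.ext_of_Iic _ _ fun c => ?_
  rw [Measure.map_apply hf.measurable measurableSet_Iic,
    Measure.restrict_apply' measurableSet_Ioc, Measure.restrict_apply' measurableSet_Ioc]
  rcases lt_or_ge c (f a) with hca | hac
  · have hpre : f ⁻¹' Iic c ∩ Ioc a b = ∅ :=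
      eq_empty_of_forall_notMem fun s ⟨hfs, has, _⟩ => (hfs.trans_lt hca).not_ge (f.mono has.le)
    have hcut : Iic c ∩ Ioc (f a) (f b) = ∅ :=
      eq_empty_of_forall_notMem fun u ⟨huc, hau, _⟩ => (huc.trans_lt hca).not_gt hau
    rw [hpre, hcut]
    simp
  rcases lt_or_ge c (f b) with hcb | hbc
  · obtain ⟨q, -, hfq, hpre⟩ := f.exists_preimage_Iic_inter_Ioc_eq hf hab ⟨hac, hcb⟩
    have hcut : Iic c ∩ Ioc (f a) (f b) = Ioc (f a) c := Set.ext fun u =>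
      ⟨fun ⟨huc, hau, _⟩ => ⟨hau, huc⟩, fun ⟨hau, huc⟩ => ⟨huc, hau, huc.trans hcb.le⟩⟩
    rw [hpre, hcut, f.measure_Ioc, hfq, Real.volume_Ioc]
  · have hpre : f ⁻¹' Iic c ∩ Ioc a b = Ioc a b :=
      inter_eq_right.2 fun s hs => (f.mono hs.2).trans hbc
    have hcut : Iic c ∩ Ioc (f a) (f b) = Ioc (f a) (f b) :=
      inter_eq_right.2 fun u hu => hu.2.trans hbc
    rw [hpre, hcut, f.measure_Ioc, Real.volume_Ioc]

lemma setIntegral_Ioc_comp_eq_intervalIntegral {E : Type*} [NormedAddCommGroup E]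
    [NormedSpace ℝ E] (hf : Continuous f) {a b : ℝ} (hab : a ≤ b) {h : ℝ → E}
    (hh : AEStronglyMeasurable h (volume.restrict (Ioc (f a) (f b)))) :
    ∫ s in Ioc a b, h (f s) ∂f.measure = ∫ u in f a..f b, h u := by
  rw [intervalIntegral.integral_of_le (f.mono hab), ← f.map_measure_restrict_Ioc hf hab,
    integral_map hf.measurable.aemeasurable (by rwa [f.map_measure_restrict_Ioc hf hab])]

lemma setIntegral_Ioc_mul_exp_sub_mul (hf : Continuous f) {a b : ℝ} (hab : a ≤ b) (k n : ℝ) :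
    ∫ s in Ioc a b, n * Real.exp (k - n * f s) ∂f.measure =
      Real.exp (k - n * f a) - Real.exp (k - n * f b) := by
  have hcont : Continuous fun u => n * Real.exp (k - n * u) := by fun_prop
  have hderiv (u : ℝ) :
      HasDerivAt (fun v => -Real.exp (k - n * v)) (n * Real.exp (k - n * u)) u := by
    simpa [mul_comm] using (((hasDerivAt_id u).const_mul n).const_sub k).exp.fun_neg
  rw [f.setIntegral_Ioc_comp_eq_intervalIntegral hf hab (h := fun u => n * Real.exp (k - n * u))
      hcont.aestronglyMeasurable,
    intervalIntegral.integral_eq_sub_of_hasDerivAt (fun u _ => hderiv u)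
      (hcont.intervalIntegrable _ _)]
  ring

theorem tendsto_nat_mul_setIntegral_mul_exp_sub (hf : Continuous f) {a b : ℝ} (hab : a < b)
    (ha : a ∈ rightSupport f) {r : ℝ → ℝ} (hr : IntegrableOn r (Ioc a b) f.measure)
    (hra : ContinuousWithinAt r (Ici a) a) :
    Tendsto (fun n : ℕ =>
        (n : ℝ) * ∫ s in Ioc a b, r s * Real.exp (n * f a - n * f s) ∂f.measure)
      atTop (𝓝 (r a)) := by
  have hmass : Tendsto (fun n : ℕ =>
      ∫ s in Ioc a b, (n : ℝ) * Real.exp (n * f a - n * f s) ∂f.measure) atTop (𝓝 1) := by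
    simp_rw [f.setIntegral_Ioc_mul_exp_sub_mul hf hab.le, sub_self, Real.exp_zero]
    simpa using (tendsto_exp_nat_mul_sub_nat_mul (lt_of_mem_rightSupport ha hab)).const_sub 1
  have hpeak := tendsto_setIntegral_peak_smul_of_integrableOn_of_tendsto measurableSet_Ioc
    measurableSet_Ioc subset_rfl self_mem_nhdsWithin (by simp [f.measure_Ioc])
    (Eventually.of_forall fun n s _ => by positivity)
    (fun u hu hau => (tendstoUniformlyOn_nat_mul_exp_sub_of_mem_rightSupport f.mono ha
      (hu.mem_nhds hau)).mono (sdiff_subset_sdiff_left Ioc_subset_Ioi_self))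
    hmass (Eventually.of_forall fun n => by fun_prop) hr
    (hra.mono (Ioc_subset_Icc_self.trans Icc_subset_Ici_self)).tendsto
  refine hpeak.congr fun n => ?_
  simp only [smul_eq_mul, ← integral_const_mul]
  congr 1 with s
  ring

end StieltjesFunction

lemma pathMeasure_eq_measure {B : ℝ → Ω → ℝ} {ω : Ω} (hmono : Monotone fun t => B t ω)
    (hrc : ∀ x, ContinuousWithinAt (fun t => B t ω) (Ici x) x) :
    pathMeasure B ω = (⟨fun t => B t ω, hmono, hrc⟩ : StieltjesFunction ℝ).measure := by
  rw [pathMeasure, dif_pos ⟨hmono, hrc⟩]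

theorem penalized_exponential_dirac_limit_general
    {Ω : Type*} {m0 : MeasurableSpace Ω} (μ : Measure Ω)
    (T : ℝ)
    (Γ : ℝ → Ω → ℝ) (hΓmono : ∀ ω, Monotone fun t => Γ t ω)
    (hΓcont : ∀ ω, Continuous fun t => Γ t ω)
    (R : ℝ → Ω → ℝ) (hRbdd : ∃ C, ∀ t ω, |R t ω| ≤ C)
    (hRrc : ∀ ω t, ContinuousWithinAt (fun s => R s ω) (Ici t) t)
    (PT : Ω → ℝ)
    (ν : Ω → ℝ)
    (hνsupp : ∀ᵐ ω ∂μ,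
      ν ω ∈ Icc 0 T ∧ (ν ω = T ∨ ν ω ∈ rightSupport fun s => Γ s ω)) :
    ∀ᵐ ω ∂μ, Tendsto
      (fun n : ℕ =>
        PT ω * Real.exp ((n : ℝ) * Γ (ν ω) ω - (n : ℝ) * Γ T ω) +
          (n : ℝ) * ∫ s in Ioc (ν ω) T,
            R s ω * Real.exp ((n : ℝ) * Γ (ν ω) ω - (n : ℝ) * Γ s ω) ∂(pathMeasure Γ ω))
      atTop (nhds (if ν ω < T then R (ν ω) ω else PT ω)) := by
  obtain ⟨C, hC⟩ := hRbdd
  filter_upwards [hνsupp] with ω ⟨⟨_, hνT⟩, hνS⟩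
  have hΓrc : ∀ x, ContinuousWithinAt (fun t => Γ t ω) (Ici x) x :=
    fun x => (hΓcont ω).continuousWithinAt
  set F : StieltjesFunction ℝ := ⟨fun t => Γ t ω, hΓmono ω, hΓrc⟩
  rw [pathMeasure_eq_measure (hΓmono ω) hΓrc]
  rcases hνT.lt_or_eq with hlt | heq
  · have hS : ν ω ∈ rightSupport F := hνS.resolve_left hlt.ne
    have hR : IntegrableOn (fun s => R s ω) (Ioc (ν ω) T) F.measure :=
      Measure.integrableOn_of_bounded (by simp [F.measure_Ioc])
        (measurable_of_continuousWithinAt_Ici (hRrc ω)).aestronglyMeasurable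
        (ae_of_all _ fun s => (hC s ω).trans_eq' (Real.norm_eq_abs _))
    rw [if_pos hlt]
    simpa using ((tendsto_exp_nat_mul_sub_nat_mul (lt_of_mem_rightSupport hS hlt)).const_mul
      (PT ω)).add (F.tendsto_nat_mul_setIntegral_mul_exp_sub (hΓcont ω) hlt hS hR (hRrc ω _))
  · simp [heq]

/-- Lemma 3.4x. Convergence of the penalized exponential weights to the
payoff evaluated at a stopping time with values in the right support of `Γ̃`. -/
theorem penalized_exponential_dirac_limit
    {Ω : Type*} {m0 : MeasurableSpace Ω} (μ : Measure Ω) [IsProbabilityMeasure μ]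
    (ℱ : Filtration ℝ m0) (T : ℝ) (hT : 0 < T)
    (Γ : ℝ → Ω → ℝ) (hΓadapted : Adapted ℱ Γ) (hΓmono : ∀ ω, Monotone fun t => Γ t ω)
    (hΓcont : ∀ ω, Continuous fun t => Γ t ω) (hΓbdd : ∃ C, ∀ t ω, |Γ t ω| ≤ C)
    (hΓ0 : ∀ ω, Γ 0 ω = 0)
    (R : ℝ → Ω → ℝ) (hRbdd : ∃ C, ∀ t ω, |R t ω| ≤ C)
    (hRrc : ∀ ω t, ContinuousWithinAt (fun s => R s ω) (Ici t) t)
    (PT : Ω → ℝ) (hPTbdd : ∃ C, ∀ ω, |PT ω| ≤ C)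
    (ν : Ω → ℝ) (hν : IsStoppingTime ℱ (fun ω => (ν ω : WithTop ℝ)))
    (hνsupp : ∀ᵐ ω ∂μ,
      ν ω ∈ Icc 0 T ∧ (ν ω = T ∨ ν ω ∈ rightSupport fun s => Γ s ω)) :
    ∀ᵐ ω ∂μ, Tendsto
      (fun n : ℕ =>
        PT ω * Real.exp ((n : ℝ) * Γ (ν ω) ω - (n : ℝ) * Γ T ω) +
          (n : ℝ) * ∫ s in Ioc (ν ω) T,
            R s ω * Real.exp ((n : ℝ) * Γ (ν ω) ω - (n : ℝ) * Γ s ω) ∂(pathMeasure Γ ω))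
      atTop (nhds (if ν ω < T then R (ν ω) ω else PT ω)) :=
  penalized_exponential_dirac_limit_general (m0 := m0) μ T Γ hΓmono hΓcont R hRbdd hRrc PT ν hνsupp
end
end
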